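/- arXiv:2411.00250 — 2 statements merged into one kernel-verified Lean document; each statement's English description precedes it below -/
import Mathlib

section
/- Let n ≥ 3 and d ≥ 2 be integers. Then every matrix M ∈ S(H(d,n)) has at least 3 distinct eigenvalues, i.e. q(H(d,n)) ≥ 3. Moreover, for d = 2 the adjacency matrix of H(2,n) has exactly 3 distinct eigenvalues, so q(H(2,n)) = 3. -/
/-!
If `M ∈ S(H(d,n))` had at most two eigenvalues, being symmetric it would satisfy
`(M - x)(M - y) = 0`, so `M²` would vanish on every pair `u, w` at distance two. Such a pair has
exactly two common neighbours `c₁, c₂`, hence `M u c₁ * M c₁ w = -(M u c₂ * M c₂ w)` and the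
weights around the 4-cycle `u c₁ w c₂` have negative product. Take three values in each of two
coordinates, a copy of `K₃ □ K₃`, and multiply these products over its nine rectangles: every edge
occurs twice, so the result is a square, yet it is a product of nine negative numbers.

`H(2,n)` is the rook's graph `K_n □ K_n`, with adjacency matrix `J ⊗ 1 + 1 ⊗ J - 2`. The two
commuting summands satisfy `P² = nP`, which puts the spectrum inside `{-2, n - 2, 2n - 2}`.
-/

open Matrix

/-- `S(G)`: real symmetric matrices whose off-diagonal zero/nonzero pattern
matches the adjacency of `G`; the diagonal is unconstrained. -/
def Sset {V : Type*} [Fintype V] [DecidableEq V] (G : SimpleGraph V) : Set (Matrix V V ℝ) :=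
  {M | M.IsSymm ∧ ∀ u v : V, u ≠ v → (M u v ≠ 0 ↔ G.Adj u v)}

/-- `q(G)`: the minimum number of distinct eigenvalues over matrices in `S(G)`. -/
noncomputable def minQ {V : Type*} [Fintype V] [DecidableEq V] (G : SimpleGraph V) : ℕ :=
  sInf {k : ℕ | ∃ M ∈ Sset G, (spectrum ℝ M).ncard = k}

/-- The Hamming graph `H(d,n)`: vertices are `d`-tuples over an `n`-set, adjacent iff
they differ in exactly one coordinate. -/
def HammingG (d n : ℕ) : SimpleGraph (Fin d → Fin n) where
  Adj u v := hammingDist u v = 1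
  symm := ⟨fun u v (h : hammingDist u v = 1) => by show hammingDist v u = 1; rwa [hammingDist_comm]⟩
  loopless := ⟨fun u (h : hammingDist u u = 1) => by simp [hammingDist_self] at h⟩

/-- The adjacency matrix of the Hamming graph `H(d,n)` over `ℝ`. -/
def HammingAdjM (d n : ℕ) : Matrix (Fin d → Fin n) (Fin d → Fin n) ℝ :=
  fun u v => if hammingDist u v = 1 then 1 else 0

open Function Polynomial Kronecker

lemma IsSelfAdjoint.sub_algebraMap_mul_sub_algebraMap_eq_zero {A : Type*} [Ring A] [StarRing A]
    [Algebra ℝ A] [TopologicalSpace A] [ContinuousFunctionalCalculus ℝ A IsSelfAdjoint]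
    {a : A} (ha : IsSelfAdjoint a) {x y : ℝ} (hs : spectrum ℝ a ⊆ {x, y}) :
    (a - algebraMap ℝ A x) * (a - algebraMap ℝ A y) = 0 := by
  calc (a - algebraMap ℝ A x) * (a - algebraMap ℝ A y)
      = cfc (fun t : ℝ => (t - x) * (t - y)) a := by
        rw [cfc_mul .., cfc_sub .., cfc_sub .., cfc_id' .., cfc_const .., cfc_const ..]
    _ = cfc (fun _ : ℝ => (0 : ℝ)) a := cfc_congr fun t ht => by
        rcases hs ht with rfl | rfl <;> simp
    _ = 0 := cfc_zero ..

lemma spectrum_subset_of_mul_mul_eq_zero {K A : Type*} [Field K] [Ring A] [Algebra K A] {a : A}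
    {x y z : K}
    (h : (a - algebraMap K A x) * (a - algebraMap K A y) * (a - algebraMap K A z) = 0) :
    spectrum K a ⊆ {x, y, z} := by
  intro μ hμ
  have hmem := spectrum.subset_polynomial_aeval a ((X - C x) * (X - C y) * (X - C z)) ⟨μ, hμ, rfl⟩
  simp only [map_mul, map_sub, aeval_X, aeval_C, h, eval_mul, eval_sub, eval_X, eval_C] at hmem
  rw [spectrum.mem_iff, sub_zero] at hmem
  have hzero : (μ - x) * (μ - y) * (μ - z) = 0 := by
    by_contra hne
    exact hmem ((IsUnit.mk0 _ hne).map (algebraMap K A))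
  simp only [mul_eq_zero, sub_eq_zero] at hzero
  simp only [Set.mem_insert_iff, Set.mem_singleton_iff]
  tauto

lemma Set.exists_subset_pair_of_ncard_lt_three {α : Type*} [Nonempty α] {s : Set α}
    (hs : s.Finite) (h : s.ncard < 3) : ∃ x y, s ⊆ {x, y} := by
  by_contra! hne
  obtain ⟨x, hx, -⟩ := Set.not_subset.1 (hne (Classical.arbitrary α) (Classical.arbitrary α))
  obtain ⟨y, hy, hyx⟩ := Set.not_subset.1 (hne x x)
  obtain ⟨z, hz, hzxy⟩ := Set.not_subset.1 (hne x y)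
  simp only [Set.mem_insert_iff, Set.mem_singleton_iff, or_self, not_or] at hyx hzxy
  have := (Set.two_lt_ncard hs).2 ⟨x, hx, y, hy, z, hz, Ne.symm hyx, Ne.symm hzxy.1, Ne.symm hzxy.2⟩
  omega

namespace Sset

variable {V : Type*} [Fintype V] [DecidableEq V] {G : SimpleGraph V} {M : Matrix V V ℝ}

lemma apply_ne_zero (hM : M ∈ Sset G) {u v : V} (h : G.Adj u v) : M u v ≠ 0 :=
  (hM.2 u v h.ne).2 h

lemma apply_eq_zero (hM : M ∈ Sset G) {u v : V} (huv : u ≠ v) (h : ¬G.Adj u v) : M u v = 0 :=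
  not_not.1 (mt (hM.2 u v huv).1 h)

lemma mul_self_apply_eq_zero_of_mul_eq_zero (hM : M ∈ Sset G) {x y : ℝ}
    (h : (M - algebraMap ℝ _ x) * (M - algebraMap ℝ _ y) = 0) {u w : V} (huw : u ≠ w)
    (hadj : ¬G.Adj u w) : (M * M) u w = 0 := by
  have := congr_fun (congr_fun h u) w
  simpa [sub_mul, mul_sub, Algebra.algebraMap_eq_smul_one, huw, apply_eq_zero hM huw hadj]
    using this

lemma mul_self_apply_eq_add (hM : M ∈ Sset G) {u w c₁ c₂ : V} (huw : u ≠ w) (hadj : ¬G.Adj u w)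
    (hc : c₁ ≠ c₂) (hcommon : ∀ c, G.Adj u c → G.Adj c w → c = c₁ ∨ c = c₂) :
    (M * M) u w = M u c₁ * M c₁ w + M u c₂ * M c₂ w := by
  rw [mul_apply]
  refine Finset.sum_eq_add c₁ c₂ hc (fun c _ hc' => ?_) (by simp) (by simp)
  by_contra hne
  have huc : M u c ≠ 0 := left_ne_zero_of_mul hne
  have hcw : M c w ≠ 0 := right_ne_zero_of_mul hne
  have hcu : c ≠ u := by rintro rfl; exact hcw (apply_eq_zero hM huw hadj)
  have hcw' : c ≠ w := by rintro rfl; exact huc (apply_eq_zero hM huw hadj)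
  rcases hcommon c ((hM.2 u c hcu.symm).1 huc) ((hM.2 c w hcw').1 hcw) with h | h
  exacts [hc'.1 h, hc'.2 h]

lemma mul_mul_mul_mul_neg (hM : M ∈ Sset G) {u w c₁ c₂ : V} (huw : u ≠ w)
    (hadj : ¬G.Adj u w) (hc : c₁ ≠ c₂) (hcommon : ∀ c, G.Adj u c → G.Adj c w → c = c₁ ∨ c = c₂)
    (huc₂ : G.Adj u c₂) (hc₂w : G.Adj c₂ w) (h0 : (M * M) u w = 0) :
    M u c₁ * M c₁ w * (M u c₂ * M c₂ w) < 0 := by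
  have hsum := (mul_self_apply_eq_add hM huw hadj hc hcommon).symm.trans h0
  rw [eq_neg_of_add_eq_zero_left hsum, neg_mul, neg_neg_iff_pos]
  exact mul_self_pos.2 (mul_ne_zero (apply_ne_zero hM huc₂) (apply_ne_zero hM hc₂w))

end Sset

lemma false_of_rectangle_products_neg (e f : Fin 3 → Fin 3 → Fin 3 → ℝ)
    (h : ∀ x x' y y', x ≠ x' → y ≠ y' → e x x' y * f x' y y' * (f x y y' * e x x' y') < 0) :
    False := by
  have pairwise_neg : ∀ a b c : ℝ, a * b < 0 → b * c < 0 → a * c < 0 → False := by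
    intro a b c hab hbc hac
    have hprod : a * b * (b * c) * (a * c) = (a * b * c) ^ 2 := by ring
    linarith [mul_neg_of_pos_of_neg (mul_pos_of_neg_of_neg hab hbc) hac, sq_nonneg (a * b * c)]
  set r : Fin 3 → ℝ := fun x => f x 0 1 * f x 1 2 * f x 0 2
  have hr : ∀ x x', x ≠ x' → r x * r x' < 0 := by
    intro x x' hx
    have hprod : (e x x' 0 * e x x' 1 * e x x' 2) ^ 2 * (r x * r x') =
        e x x' 0 * f x' 0 1 * (f x 0 1 * e x x' 1) * (e x x' 1 * f x' 1 2 * (f x 1 2 * e x x' 2)) *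
          (e x x' 0 * f x' 0 2 * (f x 0 2 * e x x' 2)) := by
      ring
    refine neg_of_mul_neg_right ?_ (sq_nonneg (e x x' 0 * e x x' 1 * e x x' 2))
    rw [hprod]
    exact mul_neg_of_pos_of_neg (mul_pos_of_neg_of_neg (h _ _ _ _ hx (by decide))
      (h _ _ _ _ hx (by decide))) (h _ _ _ _ hx (by decide))
  exact pairwise_neg _ _ _ (hr 0 1 (by decide)) (hr 1 2 (by decide)) (hr 0 2 (by decide))

/-- `p` is an induced copy of the rook's graph `K₃ □ K₃` in `G` in which the opposite corners of
each rectangle have no common neighbours besides its two other corners. -/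
structure SimpleGraph.IsRookGrid {V : Type*} (G : SimpleGraph V) (p : Fin 3 → Fin 3 → V) :
    Prop where
  ne : ∀ x x' y y', x ≠ x' → y ≠ y' → p x y ≠ p x' y'
  adj_left : ∀ x x' y, x ≠ x' → G.Adj (p x y) (p x' y)
  adj_right : ∀ x y y', y ≠ y' → G.Adj (p x y) (p x y')
  not_adj : ∀ x x' y y', x ≠ x' → y ≠ y' → ¬G.Adj (p x y) (p x' y')
  eq_or_eq_of_adj : ∀ x x' y y' c, x ≠ x' → y ≠ y' → G.Adj (p x y) c → G.Adj c (p x' y') →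
    c = p x' y ∨ c = p x y'

theorem SimpleGraph.IsRookGrid.not_forall_mul_self_apply_eq_zero {V : Type*} [Fintype V]
    [DecidableEq V] {G : SimpleGraph V} {p : Fin 3 → Fin 3 → V} (hp : G.IsRookGrid p)
    {M : Matrix V V ℝ} (hM : M ∈ Sset G) :
    ¬∀ u w, u ≠ w → ¬G.Adj u w → (M * M) u w = 0 := by
  intro h0
  refine false_of_rectangle_products_neg (fun x x' y => M (p x y) (p x' y))
    (fun x y y' => M (p x y) (p x y')) fun x x' y y' hx hy => ?_
  exact Sset.mul_mul_mul_mul_neg hM (hp.ne x x' y y' hx hy) (hp.not_adj x x' y y' hx hy)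
    (hp.ne x' x y y' hx.symm hy) (hp.eq_or_eq_of_adj x x' y y' · hx hy) (hp.adj_right x y y' hy)
    (hp.adj_left x x' y' hx) (h0 _ _ (hp.ne x x' y y' hx hy) (hp.not_adj x x' y y' hx hy))

section Hamming

variable {ι β : Type*} [DecidableEq ι]

def hammingGrid (i j : ι) (v : ι → β) (f : Fin 3 → β) (x y : Fin 3) : ι → β :=
  update (update v i (f x)) j (f y)

lemma hammingGrid_apply (i j : ι) (v : ι → β) (f : Fin 3 → β) (x y : Fin 3) (t : ι) :
    hammingGrid i j v f x y t = if t = j then f y else if t = i then f x else v t := by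
  simp only [hammingGrid, update_apply]

variable [Fintype ι] [DecidableEq β]

lemma hammingDist_eq_one_iff {u w : ι → β} :
    hammingDist u w = 1 ↔ ∃ i, u i ≠ w i ∧ ∀ j, j ≠ i → u j = w j := by
  rw [hammingDist, Finset.card_eq_one]
  simp only [Finset.eq_singleton_iff_unique_mem, Finset.mem_filter, Finset.mem_univ, true_and]
  exact exists_congr fun i => and_congr_right fun _ => forall_congr' fun j => by tauto

lemma eq_update_or_eq_update_of_hammingDist_eq_one {u w c : ι → β} {i j : ι} (hij : i ≠ j)
    (hi : u i ≠ w i) (hj : u j ≠ w j) (huc : hammingDist u c = 1) (hcw : hammingDist c w = 1) :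
    c = update u i (w i) ∨ c = update u j (w j) := by
  obtain ⟨a, -, ha⟩ := hammingDist_eq_one_iff.1 huc
  obtain ⟨b, -, hb⟩ := hammingDist_eq_one_iff.1 hcw
  have hab : ∀ t, u t ≠ w t → t = a ∨ t = b := fun t ht => by
    by_contra! h
    exact ht ((ha t h.1).trans (hb t h.2))
  have key : ∀ k, a = k → b ≠ k → c = update u k (w k) := by
    rintro k rfl hbk
    funext t
    rcases eq_or_ne t a with rfl | hta
    · simpa using hb t hbk.symm
    · simpa [hta] using (ha t hta).symm
  rcases hab i hi with rfl | rfl <;> rcases hab j hj with rfl | rfl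
  · exact absurd rfl hij
  · exact .inl (key _ rfl hij.symm)
  · exact .inr (key _ rfl hij)
  · exact absurd rfl hij

end Hamming

lemma hammingG_adj {d n : ℕ} {u v : Fin d → Fin n} :
    (HammingG d n).Adj u v ↔ hammingDist u v = 1 := Iff.rfl

lemma isRookGrid_hammingGrid {d n : ℕ} {i j : Fin d} (hij : i ≠ j) (v : Fin d → Fin n)
    {f : Fin 3 → Fin n} (hf : Injective f) : (HammingG d n).IsRookGrid (hammingGrid i j v f) := by
  have hi : ∀ x y, hammingGrid i j v f x y i = f x := by simp [hammingGrid_apply, hij]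
  have hj : ∀ x y, hammingGrid i j v f x y j = f y := by simp [hammingGrid_apply]
  have hdiff : ∀ x x' y y' t, hammingGrid i j v f x y t ≠ hammingGrid i j v f x' y' t →
      t = i ∧ x ≠ x' ∨ t = j ∧ y ≠ y' := by
    intro x x' y y' t ht
    simp only [hammingGrid_apply] at ht
    split_ifs at ht <;> aesop
  refine ⟨fun x x' y y' hx _ h => hx (hf (by simpa [hi] using congr_fun h i)), ?_, ?_, ?_, ?_⟩
  · intro x x' y hx
    refine hammingDist_eq_one_iff.2 ⟨i, by rw [hi, hi]; exact hf.ne hx, fun t ht => ?_⟩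
    by_contra h
    rcases hdiff _ _ _ _ t h with ⟨h, -⟩ | ⟨-, h⟩
    exacts [ht h, h rfl]
  · intro x y y' hy
    refine hammingDist_eq_one_iff.2 ⟨j, by rw [hj, hj]; exact hf.ne hy, fun t ht => ?_⟩
    by_contra h
    rcases hdiff _ _ _ _ t h with ⟨-, h⟩ | ⟨h, -⟩
    exacts [h rfl, ht h]
  · intro x x' y y' hx hy hadj
    obtain ⟨a, -, ha⟩ := hammingDist_eq_one_iff.1 hadj
    have hia : i = a := by
      by_contra h
      exact hf.ne hx (by simpa [hi] using ha i h)
    have hja : j = a := by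
      by_contra h
      exact hf.ne hy (by simpa [hj] using ha j h)
    exact hij (hia.trans hja.symm)
  · intro x x' y y' c hx hy h₁ h₂
    rcases eq_update_or_eq_update_of_hammingDist_eq_one hij (by rw [hi, hi]; exact hf.ne hx)
      (by rw [hj, hj]; exact hf.ne hy) h₁ h₂ with rfl | rfl
    · left
      funext t
      by_cases hti : t = i <;> simp [hammingGrid_apply, hti, hij]
    · right
      funext t
      by_cases htj : t = j <;> simp [hammingGrid_apply, htj]

theorem three_le_ncard_spectrum_of_mem_Sset_hammingG {d n : ℕ} (hn : 3 ≤ n) (hd : 2 ≤ d)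
    {M : Matrix (Fin d → Fin n) (Fin d → Fin n) ℝ} (hM : M ∈ Sset (HammingG d n)) :
    3 ≤ (spectrum ℝ M).ncard := by
  by_contra! h
  obtain ⟨x, y, hxy⟩ := Set.exists_subset_pair_of_ncard_lt_three (finite_spectrum M) h
  have hq := (isHermitian_iff_isSymm.2 hM.1).isSelfAdjoint
    |>.sub_algebraMap_mul_sub_algebraMap_eq_zero hxy
  have hgrid := isRookGrid_hammingGrid (i := (⟨0, by omega⟩ : Fin d)) (j := ⟨1, by omega⟩)
    (by simp) (fun _ => Fin.castLE hn 0) (Fin.castLE_injective hn)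
  exact hgrid.not_forall_mul_self_apply_eq_zero hM fun u w huw hadj =>
    Sset.mul_self_apply_eq_zero_of_mul_eq_zero hM hq huw hadj

lemma Commute.add_mul_add_sub_mul_add_sub_eq_zero {R A : Type*} [CommRing R] [Ring A]
    [Algebra R A] {p q : A} (hpq : Commute p q) {c : R} (hp : p * p = c • p)
    (hq : q * q = c • q) :
    (p + q) * (p + q - algebraMap R A c) * (p + q - algebraMap R A (2 * c)) = 0 := by
  simp only [Algebra.algebraMap_eq_smul_one]
  have hqp : q * p = p * q := hpq.eq.symm
  have hqpq : q * (p * q) = p * (q * q) := by rw [← mul_assoc, hqp, mul_assoc]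
  calc (p + q) * (p + q - c • 1) * (p + q - (2 * c) • 1)
      = 2 • ((p * p) * q + p * (q * q) - (2 * c) • (p * q)) +
          (p * p - c • p + (q * q - c • q)) * (p + q - (2 * c) • 1) := by
        simp only [add_mul, mul_add, sub_mul, mul_sub, smul_mul_assoc, mul_smul_comm, mul_one,
          mul_assoc, hqp, hqpq]
        module
    _ = 0 := by
        rw [hp, hq, sub_self, sub_self, add_zero, zero_mul, add_zero, smul_mul_assoc,
          mul_smul_comm]
        module

def allOnes (m R : Type*) [One R] : Matrix m m R := of fun _ _ => 1

lemma allOnes_mul_self {m R : Type*} [Fintype m] [Semiring R] :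
    allOnes m R * allOnes m R = (Fintype.card m : R) • allOnes m R := by
  ext i j
  simp [allOnes, mul_apply]

lemma reindex_hammingAdjM_two (n : ℕ) :
    reindexAlgEquiv ℝ ℝ (finTwoArrowEquiv (Fin n)) (HammingAdjM 2 n) =
      allOnes (Fin n) ℝ ⊗ₖ 1 + 1 ⊗ₖ allOnes (Fin n) ℝ - algebraMap ℝ _ 2 := by
  ext ⟨i, j⟩ ⟨k, l⟩
  simp only [coe_reindexAlgEquiv, reindex_apply, submatrix_apply, HammingAdjM, hammingDist,
    Finset.card_filter, Fin.sum_univ_two]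
  by_cases hik : i = k <;> by_cases hjl : j = l <;>
    simp [hik, hjl, allOnes, one_apply, algebraMap_matrix_apply, one_add_one_eq_two]

lemma spectrum_hammingAdjM_two_subset (n : ℕ) :
    spectrum ℝ (HammingAdjM 2 n) ⊆ {-2, (n : ℝ) - 2, 2 * (n : ℝ) - 2} := by
  rw [← AlgEquiv.spectrum_eq (reindexAlgEquiv ℝ ℝ (finTwoArrowEquiv (Fin n))),
    reindex_hammingAdjM_two]
  set P : Matrix (Fin n × Fin n) (Fin n × Fin n) ℝ := allOnes (Fin n) ℝ ⊗ₖ 1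
  set Q : Matrix (Fin n × Fin n) (Fin n × Fin n) ℝ := 1 ⊗ₖ allOnes (Fin n) ℝ
  have hPQ : Commute P Q := by
    simp only [Commute, SemiconjBy, P, Q, ← mul_kronecker_mul, one_mul, mul_one]
  have hP : P * P = (n : ℝ) • P := by
    rw [← mul_kronecker_mul, allOnes_mul_self, one_mul, smul_kronecker, Fintype.card_fin]
  have hQ : Q * Q = (n : ℝ) • Q := by
    rw [← mul_kronecker_mul, allOnes_mul_self, one_mul, kronecker_smul, Fintype.card_fin]
  have hshift : ∀ c : ℝ, P + Q - algebraMap ℝ _ 2 - algebraMap ℝ _ c =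
      P + Q - algebraMap ℝ _ (c + 2) := fun c => by
    rw [map_add]
    abel
  refine spectrum_subset_of_mul_mul_eq_zero ?_
  rw [hshift, hshift, hshift, neg_add_cancel, map_zero, sub_zero, sub_add_cancel, sub_add_cancel]
  exact hPQ.add_mul_add_sub_mul_add_sub_eq_zero hP hQ

lemma hammingAdjM_mem_Sset (d n : ℕ) : HammingAdjM d n ∈ Sset (HammingG d n) :=
  ⟨IsSymm.ext fun u v => by simp [HammingAdjM, hammingDist_comm],
    fun u v _ => by simp [HammingAdjM, hammingG_adj]⟩

lemma ncard_spectrum_hammingAdjM_two {n : ℕ} (hn : 3 ≤ n) :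
    (spectrum ℝ (HammingAdjM 2 n)).ncard = 3 := by
  refine le_antisymm ?_ (three_le_ncard_spectrum_of_mem_Sset_hammingG hn le_rfl
    (hammingAdjM_mem_Sset 2 n))
  have h₁ := Set.ncard_insert_le (-2 : ℝ) {(n : ℝ) - 2, 2 * (n : ℝ) - 2}
  have h₂ := Set.ncard_insert_le ((n : ℝ) - 2) {2 * (n : ℝ) - 2}
  rw [Set.ncard_singleton] at h₂
  have := Set.ncard_le_ncard (spectrum_hammingAdjM_two_subset n)
  omega

/-- For `n ≥ 3` and `d ≥ 2`, every `M ∈ S(H(d,n))` has at least `3`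
distinct eigenvalues, i.e. `q(H(d,n)) ≥ 3`.  Moreover for `d = 2` the adjacency matrix of
`H(2,n)` has exactly `3` distinct eigenvalues, so `q(H(2,n)) = 3`. -/
theorem stmt_16 (n d : ℕ) (hn : 3 ≤ n) (hd : 2 ≤ d) :
    (∀ M ∈ Sset (HammingG d n), 3 ≤ (spectrum ℝ M).ncard) ∧
    3 ≤ minQ (HammingG d n) ∧
    (d = 2 → (spectrum ℝ (HammingAdjM d n)).ncard = 3 ∧ minQ (HammingG d n) = 3) := by
  have hminQ : 3 ≤ minQ (HammingG d n) := by
    have hne : {k | ∃ M ∈ Sset (HammingG d n), (spectrum ℝ M).ncard = k}.Nonempty :=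
      ⟨_, _, hammingAdjM_mem_Sset d n, rfl⟩
    obtain ⟨M, hM, hk⟩ := Nat.sInf_mem hne
    rw [minQ, ← hk]
    exact three_le_ncard_spectrum_of_mem_Sset_hammingG hn hd hM
  refine ⟨fun M hM => three_le_ncard_spectrum_of_mem_Sset_hammingG hn hd hM, hminQ, ?_⟩
  rintro rfl
  have h3 := ncard_spectrum_hammingAdjM_two hn
  exact ⟨h3, le_antisymm (Nat.sInf_le ⟨_, hammingAdjM_mem_Sset 2 n, h3⟩) hminQ⟩
end

section
/- Let d ≥ 1 and let n₁,…,n_d be even positive integers with n_i ≠ 4 for all i. Let G be the graph on vertex set ∏_{i=1}^{d} {0,…,n_i − 1} in which two vertices u, v are adjacent if and only if u_i ≠ v_i for every coordinate i (the tensor product K_{n₁} × ⋯ × K_{n_d} of complete graphs). Then there exists a real symmetric matrix M ∈ S(G) with zero diagonal satisfying M² = I; hence M has exactly the two distinct eigenvalues 1 and −1, and q(G) = 2. In particular, for every even n ≠ 4 and every d ≥ 1, the distance-d graph H(d,n,d) of the Hamming graph (vertices the d-tuples over {0,…,n−1}, adjacent iff they differ in all d coordinates) satisfies q(H(d,n,d))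 = 2. -/
/-!
Write `n = 2m`. With `J` the all-ones `m × m` matrix, `C = (J - I)/m` vanishes exactly on the
diagonal, and it is a combination of the averaging projection `J/m` and its complement, with
eigenvalues `c₁ = 1 - 1/m` and `c₂ = -1/m`. The matrix `S` with eigenvalues `√(1 - cᵢ²)` on the
same two eigenspaces commutes with `C`, satisfies `C² + S² = I`, and has no zero entry as long as
`c₁² ≠ c₂²`, i.e. `m ≠ 2`. Hence `[[C, S], [S, -C]]` is a symmetric involution of size `n` whose
zero entries are exactly the diagonal ones. The Kronecker product of such matrices over the `d`
coordinates is a symmetric involution with the zero pattern of `K_{n₁} × ⋯ × K_{n_d}` and zero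
diagonal, so its spectrum is `{1, -1}`. Conversely, a symmetric matrix with a single eigenvalue is
scalar, so a matrix in `S(G)` has at least two eigenvalues once `G` has an edge.
-/

open Matrix

/-- The tensor product `K_{n₁} × ⋯ × K_{n_d}` of complete graphs: vertices are tuples in
`∏ i, {0,…,n i − 1}`, and two (distinct) vertices are adjacent iff they differ in every
coordinate. -/
def tensorComplete (d : ℕ) (n : Fin d → ℕ) : SimpleGraph ((i : Fin d) → Fin (n i)) where
  Adj u v := u ≠ v ∧ ∀ i, u i ≠ v i
  symm := ⟨fun u v h => ⟨h.1.symm, fun i => (h.2 i).symm⟩⟩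
  loopless := ⟨fun u h => h.1 rfl⟩

/-- The distance-`d` graph `H(d,n,d)` of the Hamming graph: vertices are `d`-tuples over
an `n`-set, adjacent iff they differ in all `d` coordinates. -/
def HammingDistD (d n : ℕ) : SimpleGraph (Fin d → Fin n) where
  Adj u v := u ≠ v ∧ hammingDist u v = d
  symm := ⟨fun u v h => ⟨h.1.symm, by rw [hammingDist_comm]; exact h.2⟩⟩
  loopless := ⟨fun u h => h.1 rfl⟩

theorem IsIdempotentElem.smul_add_smul_mul {R A : Type*} [CommSemiring R] [Ring A] [Algebra R A]
    {P : A} (hP : IsIdempotentElem P) (x y x' y' : R) :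
    (x • P + y • (1 - P)) * (x' • P + y' • (1 - P)) = (x * x') • P + (y * y') • (1 - P) := by
  have h₁ : P * (1 - P) = 0 := by rw [mul_sub, mul_one, hP.eq, sub_self]
  have h₂ : (1 - P) * P = 0 := by rw [sub_mul, one_mul, hP.eq, sub_self]
  simp only [add_mul, mul_add, smul_mul_smul, hP.eq, hP.one_sub.eq, h₁, h₂, smul_zero, add_zero,
    zero_add]

theorem spectrum_eq_of_mul_self_eq_one {𝕜 A : Type*} [Field 𝕜] [Ring A] [Algebra 𝕜 A] {a : A}
    (ha : a * a = 1) (h₁ : a ≠ 1) (h₂ : a ≠ -1) : spectrum 𝕜 a = {1, -1} := by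
  ext r
  simp only [Set.mem_insert_iff, Set.mem_singleton_iff, spectrum.mem_iff]
  constructor
  · intro hr
    by_contra! hne
    have hfac : (algebraMap 𝕜 A r - a) * (algebraMap 𝕜 A r + a) = algebraMap 𝕜 A (r * r - 1) := by
      rw [sub_mul, mul_add, mul_add, ha, ← Algebra.commutes r a, map_sub, map_mul, map_one]
      abel
    have hunit : IsUnit (algebraMap 𝕜 A (r * r - 1)) := by
      refine (IsUnit.mk0 _ fun h => ?_).map (algebraMap 𝕜 A)
      have : (r - 1) * (r + 1) = 0 := by linear_combination h
      rcases mul_eq_zero.mp this with h | h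
      exacts [hne.1 (sub_eq_zero.mp h), hne.2 (eq_neg_of_add_eq_zero_left h)]
    have hcomm : Commute (algebraMap 𝕜 A r - a) (algebraMap 𝕜 A r + a) :=
      ((Commute.refl _).add_right (Algebra.commute_algebraMap_left r a)).sub_left
        ((Algebra.commute_algebraMap_left r a).symm.add_right (Commute.refl a))
    exact hr (hcomm.isUnit_mul_iff.mp (hfac ▸ hunit)).1
  · rintro (rfl | rfl) hu
    · refine h₂ (eq_neg_of_add_eq_zero_right (hu.mul_right_eq_zero.mp ?_))
      rw [map_one, sub_mul, mul_add, mul_add, ha]; noncomm_ring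
    · refine h₁ (sub_eq_zero.mp (hu.mul_right_eq_zero.mp ?_)).symm
      rw [map_neg, map_one, sub_mul, mul_sub, mul_sub, ha]; noncomm_ring

theorem sq_eq_sq_of_sqrt_one_sub_sq_eq {a b : ℝ} (ha : a ^ 2 ≤ 1) (hb : b ^ 2 ≤ 1)
    (h : √(1 - a ^ 2) = √(1 - b ^ 2)) : a ^ 2 = b ^ 2 := by
  rw [Real.sqrt_inj (by linarith) (by linarith)] at h
  linarith

theorem hammingDist_eq_card_iff {ι : Type*} [Fintype ι] {β : ι → Type*} [∀ i, DecidableEq (β i)]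
    {x y : ∀ i, β i} : hammingDist x y = Fintype.card ι ↔ ∀ i, x i ≠ y i := by
  rw [hammingDist, Finset.card_eq_iff_eq_univ, Finset.filter_eq_self]
  simp

namespace Matrix

section PiKronecker

variable {ι R : Type*} [Fintype ι] [CommSemiring R] {α β γ : ι → Type*}

def piKronecker (A : ∀ i, Matrix (α i) (β i) R) : Matrix (∀ i, α i) (∀ i, β i) R :=
  of fun u v => ∏ i, A i (u i) (v i)

@[simp]
theorem piKronecker_apply (A : ∀ i, Matrix (α i) (β i) R) (u : ∀ i, α i) (v : ∀ i, β i) :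
    piKronecker A u v = ∏ i, A i (u i) (v i) :=
  rfl

theorem piKronecker_mul [DecidableEq ι] [∀ i, Fintype (β i)] (A : ∀ i, Matrix (α i) (β i) R)
    (B : ∀ i, Matrix (β i) (γ i) R) :
    piKronecker A * piKronecker B = piKronecker fun i => A i * B i := by
  ext u w
  simp only [mul_apply, piKronecker_apply, ← Finset.prod_mul_distrib]
  exact (Fintype.prod_sum fun i b => A i (u i) b * B i b (w i)).symm

theorem piKronecker_one [∀ i, DecidableEq (α i)] :
    piKronecker (fun i => (1 : Matrix (α i) (α i) R)) = 1 := by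
  ext u v
  simp [one_apply, Finset.prod_ite_zero, funext_iff]

theorem transpose_piKronecker (A : ∀ i, Matrix (α i) (β i) R) :
    (piKronecker A)ᵀ = piKronecker fun i => (A i)ᵀ :=
  rfl

theorem piKronecker_apply_eq_zero_iff [NoZeroDivisors R] [Nontrivial R]
    (A : ∀ i, Matrix (α i) (β i) R) (u : ∀ i, α i) (v : ∀ i, β i) :
    piKronecker A u v = 0 ↔ ∃ i, A i (u i) (v i) = 0 := by
  simp [Finset.prod_eq_zero_iff]

end PiKronecker

theorem fromBlocks_mul_self_eq_one {n R : Type*} [Fintype n] [DecidableEq n] [Ring R]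
    {C S : Matrix n n R} (hCS : Commute C S) (h : C * C + S * S = 1) :
    fromBlocks C S S (-C) * fromBlocks C S S (-C) = 1 := by
  simp [fromBlocks_multiply, hCS.eq, h, add_comm (S * S), ← fromBlocks_one]

theorem fromBlocks_apply_eq_zero_iff {n R : Type*} [AddGroup R] {C S : Matrix n n R}
    (hC : ∀ i j, C i j = 0 ↔ i = j) (hS : ∀ i j, S i j ≠ 0) (x y : n ⊕ n) :
    fromBlocks C S S (-C) x y = 0 ↔ x = y := by
  rcases x with i | i <;> rcases y with j | j <;> simp [hC, hS]

theorem IsHermitian.eq_smul_one_of_spectrum_subsingleton {𝕜 n : Type*} [RCLike 𝕜]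
    [Fintype n] [DecidableEq n] {A : Matrix n n 𝕜} (hA : A.IsHermitian)
    (h : (spectrum ℝ A).Subsingleton) (i : n) :
    A = (hA.eigenvalues i : 𝕜) • (1 : Matrix n n 𝕜) := by
  have hconst : RCLike.ofReal ∘ hA.eigenvalues = fun _ => (hA.eigenvalues i : 𝕜) :=
    funext fun j => by
      rw [Function.comp_apply, h (hA.eigenvalues_mem_spectrum_real j)
        (hA.eigenvalues_mem_spectrum_real i)]
  conv_lhs => rw [hA.spectral_theorem, hconst, ← smul_one_eq_diagonal, map_smul, map_one]

variable (n : Type*) [Fintype n]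

noncomputable def averaging : Matrix n n ℝ := of fun _ _ => (Fintype.card n : ℝ)⁻¹

theorem isIdempotentElem_averaging : IsIdempotentElem (averaging n) := by
  ext i j
  have hcard : (Fintype.card n : ℝ) ≠ 0 := Nat.cast_ne_zero.mpr (Fintype.card_pos_iff.mpr ⟨i⟩).ne'
  simp only [averaging, mul_apply, of_apply, Finset.sum_const, Finset.card_univ, nsmul_eq_mul]
  field_simp

variable [DecidableEq n]

-- `averagingComb n x y` acts as `x` on constant vectors and as `y` on their orthogonal complement.
noncomputable def averagingComb (x y : ℝ) : Matrix n n ℝ := x • averaging n + y • (1 - averaging n)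

variable {n}

theorem averagingComb_mul (x y x' y' : ℝ) :
    averagingComb n x y * averagingComb n x' y' = averagingComb n (x * x') (y * y') :=
  (isIdempotentElem_averaging n).smul_add_smul_mul x y x' y'

theorem averagingComb_add (x y x' y' : ℝ) :
    averagingComb n x y + averagingComb n x' y' = averagingComb n (x + x') (y + y') := by
  simp only [averagingComb, add_smul]
  abel

theorem averagingComb_one_one : averagingComb n 1 1 = 1 := by
  simp [averagingComb]

theorem commute_averagingComb (x y x' y' : ℝ) :
    Commute (averagingComb n x y) (averagingComb n x' y') := by
  rw [Commute, SemiconjBy, averagingComb_mul, averagingComb_mul, mul_comm x, mul_comm y]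

theorem isSymm_averagingComb (x y : ℝ) : (averagingComb n x y).IsSymm := by
  ext i j
  simp [averagingComb, averaging, one_apply, eq_comm]

theorem averagingComb_apply_self (x y : ℝ) (i : n) :
    averagingComb n x y i i = (x + (Fintype.card n - 1) * y) / Fintype.card n := by
  have hcard : (Fintype.card n : ℝ) ≠ 0 := Nat.cast_ne_zero.mpr (Fintype.card_pos_iff.mpr ⟨i⟩).ne'
  simp only [averagingComb, averaging, add_apply, smul_apply, sub_apply, one_apply_eq, of_apply,
    smul_eq_mul]
  field_simp

theorem averagingComb_apply_of_ne (x y : ℝ) {i j : n} (hij : i ≠ j) :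
    averagingComb n x y i j = (x - y) / Fintype.card n := by
  simp only [averagingComb, averaging, add_apply, smul_apply, sub_apply, one_apply_ne hij, of_apply,
    smul_eq_mul]
  ring

theorem exists_commute_mul_self_add_mul_self_eq_one (n : Type*) [Fintype n] [DecidableEq n]
    (h2 : Fintype.card n ≠ 2) :
    ∃ C S : Matrix n n ℝ, C.IsSymm ∧ S.IsSymm ∧ Commute C S ∧ C * C + S * S = 1 ∧
      (∀ i j, C i j = 0 ↔ i = j) ∧ ∀ i j, S i j ≠ 0 := by
  set m : ℝ := (Fintype.card n : ℝ) with hm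
  have hm_inv : 0 ≤ m⁻¹ ∧ m⁻¹ ≤ 1 := ⟨by positivity, Nat.cast_inv_le_one _⟩
  have hc₁ : (1 - m⁻¹) ^ 2 ≤ 1 := by nlinarith
  have hc₂ : (-m⁻¹) ^ 2 ≤ 1 := by nlinarith
  have hc₁₂ : (1 - m⁻¹) ^ 2 ≠ (-m⁻¹) ^ 2 := by
    intro h
    have : m⁻¹ = 2⁻¹ := by linear_combination (-1 / 2 : ℝ) * h
    have hm2 : m = 2 := inv_injective this
    exact h2 (by rw [hm] at hm2; exact_mod_cast hm2)
  refine ⟨averagingComb n (1 - m⁻¹) (-m⁻¹), averagingComb n √(1 - (1 - m⁻¹) ^ 2) √(1 - (-m⁻¹) ^ 2),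
    isSymm_averagingComb _ _, isSymm_averagingComb _ _, commute_averagingComb _ _ _ _, ?_,
    fun i j => ?_, fun i j => ?_⟩
  · rw [averagingComb_mul, averagingComb_mul, averagingComb_add, ← averagingComb_one_one]
    congr 1 <;> rw [← sq, ← sq, Real.sq_sqrt (by linarith)] <;> ring
  · have hm0 : m ≠ 0 := Nat.cast_ne_zero.mpr (Fintype.card_pos_iff.mpr ⟨i⟩).ne'
    rcases eq_or_ne i j with rfl | hij
    · simp only [averagingComb_apply_self, ← hm, iff_true]
      field_simp
      ring
    · simp [averagingComb_apply_of_ne _ _ hij, ← hm, hm0, hij]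
  · have hm1 : 1 ≤ m := Nat.one_le_cast.mpr (Fintype.card_pos_iff.mpr ⟨i⟩)
    have hm0 : 0 < m := by linarith
    rcases eq_or_ne i j with rfl | hij
    · rw [averagingComb_apply_self, ← hm]
      have hs₁ : 0 < √(1 - (1 - m⁻¹) ^ 2) := Real.sqrt_pos.mpr (by nlinarith [inv_pos.mpr hm0])
      have hs₂ : 0 ≤ (m - 1) * √(1 - (-m⁻¹) ^ 2) := mul_nonneg (by linarith) (Real.sqrt_nonneg _)
      exact (div_pos (by linarith) hm0).ne'
    · rw [averagingComb_apply_of_ne _ _ hij, ← hm]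
      exact div_ne_zero (sub_ne_zero.mpr fun h => hc₁₂ (sq_eq_sq_of_sqrt_one_sub_sq_eq hc₁ hc₂ h))
        hm0.ne'

theorem exists_isSymm_mul_self_eq_one_apply_eq_zero_iff (α : Type*) [Fintype α] [DecidableEq α]
    (heven : Even (Fintype.card α)) (h4 : Fintype.card α ≠ 4) :
    ∃ A : Matrix α α ℝ, A.IsSymm ∧ A * A = 1 ∧ ∀ i j, A i j = 0 ↔ i = j := by
  obtain ⟨m, hm⟩ := heven
  obtain ⟨C, S, hC, hS, hCS, hCS_one, hC_zero, hS_ne⟩ :=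
    exists_commute_mul_self_add_mul_self_eq_one (Fin m) (by rw [Fintype.card_fin]; omega)
  let e : α ≃ Fin m ⊕ Fin m := (Fintype.equivFinOfCardEq hm).trans finSumFinEquiv.symm
  refine ⟨(fromBlocks C S S (-C)).submatrix e e, (hC.fromBlocks hS.eq hC.neg).submatrix e, ?_,
    fun i j => ?_⟩
  · rw [submatrix_mul_equiv, fromBlocks_mul_self_eq_one hCS hCS_one, submatrix_one_equiv]
  · rw [submatrix_apply, fromBlocks_apply_eq_zero_iff hC_zero hS_ne, e.injective.eq_iff]

end Matrix

section SimpleGraph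

variable {V : Type*} [Fintype V] [DecidableEq V] {G : SimpleGraph V} {M : Matrix V V ℝ}

theorem two_le_ncard_spectrum_of_mem_Sset (hM : M ∈ Sset G) {u v : V} (huv : G.Adj u v) :
    2 ≤ (spectrum ℝ M).ncard := by
  by_contra! h
  have hsub : (spectrum ℝ M).Subsingleton := Set.ncard_le_one_iff_subsingleton.mp (by omega)
  have hscalar := (Matrix.isHermitian_iff_isSymm.mpr hM.1).eq_smul_one_of_spectrum_subsingleton
    hsub u
  have hne := (hM.2 u v huv.ne).mpr huv
  rw [hscalar] at hne
  simp [Matrix.one_apply_ne huv.ne] at hne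

theorem minQ_eq_two (hM : M ∈ Sset G) (hspec : (spectrum ℝ M).ncard = 2) {u v : V}
    (huv : G.Adj u v) : minQ G = 2 :=
  le_antisymm (Nat.sInf_le ⟨M, hM, hspec⟩) <|
    le_csInf ⟨2, M, hM, hspec⟩ fun _ ⟨_, hM', hk⟩ => hk ▸ two_le_ncard_spectrum_of_mem_Sset hM' huv

end SimpleGraph

theorem tensorComplete_adj_iff {d : ℕ} (hd : 1 ≤ d) {n : Fin d → ℕ} {u v : ∀ i, Fin (n i)} :
    (tensorComplete d n).Adj u v ↔ ∀ i, u i ≠ v i :=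
  ⟨And.right, fun h => ⟨fun huv => h ⟨0, hd⟩ (congrFun huv _), h⟩⟩

theorem hammingDistD_eq_tensorComplete (d n : ℕ) :
    HammingDistD d n = tensorComplete d fun _ => n := by
  ext u v
  refine and_congr_right fun _ => ?_
  simpa using hammingDist_eq_card_iff (x := u) (y := v)

theorem exists_mem_Sset_tensorComplete {d : ℕ} (hd : 1 ≤ d) (n : Fin d → ℕ)
    (heven : ∀ i, Even (n i)) (h4 : ∀ i, n i ≠ 4) :
    ∃ M ∈ Sset (tensorComplete d n), (∀ v, M v v = 0) ∧ M * M = 1 := by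
  choose A hA_symm hA_sq hA_zero using fun i =>
    Matrix.exists_isSymm_mul_self_eq_one_apply_eq_zero_iff (Fin (n i))
      (by simpa using heven i) (by simpa using h4 i)
  have hzero (u v) : Matrix.piKronecker A u v = 0 ↔ ∃ i, u i = v i := by
    simp only [Matrix.piKronecker_apply_eq_zero_iff, hA_zero]
  refine ⟨Matrix.piKronecker A, ⟨?_, fun u v _ => ?_⟩, fun v => (hzero v v).mpr ⟨⟨0, hd⟩, rfl⟩, ?_⟩
  · rw [Matrix.IsSymm, Matrix.transpose_piKronecker]
    exact congrArg Matrix.piKronecker (funext fun i => (hA_symm i).eq)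
  · rw [Ne, hzero, tensorComplete_adj_iff hd, not_exists]
  · rw [Matrix.piKronecker_mul]
    simp only [hA_sq, Matrix.piKronecker_one]

/-- Let `d ≥ 1` and let `n₁,…,n_d` be even positive integers all `≠ 4`.
Then the tensor product `G = K_{n₁} × ⋯ × K_{n_d}` admits a matrix `M ∈ S(G)` with zero
diagonal and `M² = I`; hence `M` has exactly the two distinct eigenvalues `1` and `−1`,
and `q(G) = 2`.  In particular, for every even `n ≠ 4` (with `n > 0`), the distance-`d`
graph `H(d,n,d)` of the Hamming graph satisfies `q(H(d,n,d)) = 2`. -/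
theorem stmt_17 (d : ℕ) (hd : 1 ≤ d) :
    (∀ n : Fin d → ℕ, (∀ i, Even (n i)) → (∀ i, 0 < n i) → (∀ i, n i ≠ 4) →
      (∃ M ∈ Sset (tensorComplete d n),
        (∀ v, M v v = 0) ∧ M * M = 1 ∧ spectrum ℝ M = {1, -1}) ∧
      minQ (tensorComplete d n) = 2) ∧
    (∀ n : ℕ, Even n → 0 < n → n ≠ 4 → minQ (HammingDistD d n) = 2) := by
  have htensor (n : Fin d → ℕ) (heven : ∀ i, Even (n i)) (hpos : ∀ i, 0 < n i)
      (h4 : ∀ i, n i ≠ 4) :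
      (∃ M ∈ Sset (tensorComplete d n),
        (∀ v, M v v = 0) ∧ M * M = 1 ∧ spectrum ℝ M = {1, -1}) ∧
      minQ (tensorComplete d n) = 2 := by
    obtain ⟨M, hM, hdiag, hsq⟩ := exists_mem_Sset_tensorComplete hd n heven h4
    have htwo (i) : 1 < n i := by obtain ⟨r, hr⟩ := heven i; have := hpos i; omega
    let u : ∀ i, Fin (n i) := fun i => ⟨0, hpos i⟩
    let v : ∀ i, Fin (n i) := fun i => ⟨1, htwo i⟩
    have huv : (tensorComplete d n).Adj u v :=
      (tensorComplete_adj_iff hd).mpr fun i => by simp [u, v]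
    have hspec : spectrum ℝ M = {1, -1} :=
      spectrum_eq_of_mul_self_eq_one hsq (fun h => by simpa [h] using hdiag u)
        (fun h => by simpa [h] using hdiag u)
    exact ⟨⟨M, hM, hdiag, hsq, hspec⟩,
      minQ_eq_two hM (by rw [hspec]; exact Set.ncard_pair (by norm_num)) huv⟩
  refine ⟨htensor, fun n heven hpos h4 => ?_⟩
  rw [hammingDistD_eq_tensorComplete]
  exact (htensor _ (fun _ => heven) (fun _ => hpos) (fun _ => h4)).2
end
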